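/- arXiv:math/0305154 — 6 statements merged into one kernel-verified Lean document; each statement's English description precedes it below -/
import Mathlib

section
/- Let P be a finite poset with a unique minimal element 0̂ and let x ∈ P. Then there exists a poset isomorphism φ : ∏_{y ∈ D(x)} [0̂,y] → [0̂,x] such that for each y ∈ D(x), φ sends the tuple which is y in the coordinate indexed by y and 0̂ in all other coordinates to y; moreover each interval [0̂,y] for y ∈ D(x) is irreducible. -/
attribute [local instance] Classical.propDecidable

universe u

/-- The set of maximal elements of `G` below `x`. -/
def maxBelow {L : Type u} [PartialOrder L] (G : Set L) (x : L) : Set L :=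
  {g | g ∈ G ∧ g ≤ x ∧ ∀ h ∈ G, h ≤ x → g ≤ h → h = g}

/-- The tuple in the product of lower intervals which is `g` in the coordinate
indexed by `g` and bottom elsewhere. -/
noncomputable def deltaTuple {L : Type u} [PartialOrder L] [OrderBot L] (G : Set L) (x : L)
    (g : maxBelow G x) : (h : maxBelow G x) → Set.Iic (h : L) :=
  fun h => if (h : L) = (g : L) then ⟨(h : L), le_refl _⟩ else ⟨⊥, bot_le⟩

/-- A poset is irreducible if it is not order-isomorphic to a product of two posets,
each having at least two elements. -/
def IsIrreduciblePoset (P : Type u) [PartialOrder P] : Prop :=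
  ¬ ∃ (A : Type u) (B : Type u) (_ : PartialOrder A) (_ : PartialOrder B),
      Nontrivial A ∧ Nontrivial B ∧ Nonempty (P ≃o A × B)

/-- An element `x` is irreducible if the interval `[⊥, x]` is an irreducible poset. -/
def IsIrredElem {L : Type u} [PartialOrder L] (x : L) : Prop :=
  IsIrreduciblePoset (Set.Iic x)

/-- The set of elementary divisors of `x`: the maximal irreducible elements below `x`. -/
abbrev elemDivisors {L : Type u} [PartialOrder L] (x : L) : Set L :=
  maxBelow {y | IsIrredElem y} x

/-!
Induct on the size of `[⊥, x]`. If `[⊥, x]` is irreducible, then `x` is its own unique elementary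
divisor. Otherwise `[⊥, x] ≃o A × B` with `A`, `B` nontrivial, and the elements `a`, `b` of
`[⊥, x]` corresponding to `(⊤, ⊥)` and `(⊥, ⊤)` exhibit `[⊥, x]` as the internal product
`[⊥, a] × [⊥, b]`. For irreducible `y ≤ x` the interval `[⊥, y]` is the product of the intervals
below the two coordinates of `y`, so one of them is `⊥` and `y ≤ a` or `y ≤ b`. Hence
`D(x) = D(a) ⊔ D(b)` (atoms are irreducible, so `⊥ ∉ D(a)`), and the decompositions of `[⊥, a]`
and `[⊥, b]` given by induction combine with `[⊥, a] × [⊥, b] ≃o [⊥, x]`.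
-/

open Set

namespace OrderIso

variable {α β γ δ : Type*}

def prodCongr [LE α] [LE β] [LE γ] [LE δ] (e₁ : α ≃o β) (e₂ : γ ≃o δ) : α × γ ≃o β × δ where
  toEquiv := e₁.toEquiv.prodCongr e₂.toEquiv
  map_rel_iff' := by simp [Prod.le_def]

def piUnique {ι : Type*} [Unique ι] (π : ι → Type*) [∀ i, LE (π i)] :
    ((i : ι) → π i) ≃o π default where
  toEquiv := Equiv.piUnique π
  map_rel_iff' := by simp [Pi.le_def, Unique.forall_iff]

def mapIic [Preorder α] [Preorder β] (e : α ≃o β) (a : α) : Iic a ≃o Iic (e a) where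
  toFun z := ⟨e z, e.monotone z.2⟩
  invFun z := ⟨e.symm z, e.symm_apply_le.mpr z.2⟩
  left_inv z := Subtype.ext (e.symm_apply_apply z)
  right_inv z := Subtype.ext (e.apply_symm_apply z)
  map_rel_iff' := e.le_iff_le

def IicIic [Preorder α] {x y : α} (hy : y ≤ x) : Iic (⟨y, hy⟩ : Iic x) ≃o Iic y where
  toFun z := ⟨z.1.1, z.2⟩
  invFun z := ⟨⟨z.1, z.2.trans hy⟩, z.2⟩
  left_inv _ := rfl
  right_inv _ := rfl
  map_rel_iff' := Iff.rfl

def IicProd [Preorder α] [Preorder β] (p : α × β) : Iic p ≃o Iic p.1 × Iic p.2 where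
  toFun z := (⟨z.1.1, z.2.1⟩, ⟨z.1.2, z.2.2⟩)
  invFun z := ⟨(z.1, z.2), z.1.2, z.2.2⟩
  left_inv _ := rfl
  right_inv _ := rfl
  map_rel_iff' := Iff.rfl

def IicProdBot [Preorder α] [PartialOrder β] [OrderBot β] (a : α) :
    Iic ((a, ⊥) : α × β) ≃o Iic a where
  toFun z := ⟨z.1.1, z.2.1⟩
  invFun z := ⟨(z.1, ⊥), z.2, le_rfl⟩
  left_inv z := Subtype.ext (Prod.ext rfl (le_bot_iff.mp z.2.2).symm)
  right_inv _ := rfl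
  map_rel_iff' {z _} := ⟨fun h => ⟨h, z.2.2.trans bot_le⟩, And.left⟩

abbrev fstBoundedOrder [Preorder α] [Preorder β] [Preorder γ] [BoundedOrder γ] (e : γ ≃o α × β) :
    BoundedOrder α where
  top := (e ⊤).1
  le_top a := (e.symm_apply_le.mp (le_top : e.symm (a, (e ⊤).2) ≤ ⊤)).1
  bot := (e ⊥).1
  bot_le a := (e.le_symm_apply.mp (bot_le : ⊥ ≤ e.symm (a, (e ⊥).2))).1

noncomputable def piSplit {ι : Type*} {U S T : Set ι} (hU : U = S ∪ T) (hST : Disjoint S T)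
    (π : ι → Type*) [∀ i, LE (π i)] :
    ((i : U) → π i) ≃o ((i : S) → π i) × ((i : T) → π i) where
  toFun f :=
    (fun i => f ⟨i, hU.symm.subset (Or.inl i.2)⟩, fun i => f ⟨i, hU.symm.subset (Or.inr i.2)⟩)
  invFun g i :=
    if h : (i : ι) ∈ S then g.1 ⟨i, h⟩ else g.2 ⟨i, (hU.subset i.2).resolve_left h⟩
  left_inv f := by
    funext i
    by_cases h : (i : ι) ∈ S <;> simp [h]
  right_inv g := by
    refine Prod.ext (funext fun i => ?_) (funext fun i => ?_)
    · simp [i.2]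
    · simp [hST.notMem_of_mem_right i.2]
  map_rel_iff' := by
    refine ⟨fun h i => ?_, fun h => ⟨fun i => h _, fun i => h _⟩⟩
    rcases hU.subset i.2 with hi | hi
    · exact h.1 ⟨i, hi⟩
    · exact h.2 ⟨i, hi⟩

end OrderIso

theorem Set.Iic.nontrivial_of_ne_bot {α : Type*} [PartialOrder α] [OrderBot α] {a : α}
    (ha : a ≠ ⊥) : Nontrivial (Iic a) :=
  ⟨⊥, ⊤, fun h => ha (congrArg Subtype.val h).symm⟩

theorem IsIrreduciblePoset.of_orderIso {α β : Type u} [PartialOrder α] [PartialOrder β]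
    (e : α ≃o β) (h : IsIrreduciblePoset α) : IsIrreduciblePoset β :=
  fun ⟨A, B, _, _, hA, hB, ⟨f⟩⟩ => h ⟨A, B, _, _, hA, hB, ⟨e.trans f⟩⟩

theorem isIrreduciblePoset_of_card_lt_four {α : Type*} [PartialOrder α] [Finite α]
    (h : Nat.card α < 4) : IsIrreduciblePoset α := by
  rintro ⟨A, B, _, _, hA, hB, ⟨f⟩⟩
  have : Finite (A × B) := .of_equiv α f.toEquiv
  have : Finite A := .prod_left B
  have : Finite B := .prod_right A
  have h2A : 2 ≤ Nat.card A := Finite.one_lt_card_iff_nontrivial.mpr hA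
  have h2B : 2 ≤ Nat.card B := Finite.one_lt_card_iff_nontrivial.mpr hB
  rw [Nat.card_congr f.toEquiv, Nat.card_prod] at h
  nlinarith

theorem IsAtom.isIrredElem {α : Type*} [PartialOrder α] [OrderBot α] {a : α} (ha : IsAtom a) :
    IsIrredElem a := by
  have : Finite (Set.Iic a) := by rw [ha.Iic_eq]; infer_instance
  refine isIrreduciblePoset_of_card_lt_four ?_
  rw [Nat.card_coe_set_eq, ha.Iic_eq]
  exact (ncard_insert_le _ _).trans_lt (by simp)

theorem IsIrreduciblePoset.fst_eq_bot_or_snd_eq_bot {α β : Type u} [PartialOrder α]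
    [PartialOrder β] [OrderBot α] [OrderBot β] {p : α × β} (h : IsIrreduciblePoset (Iic p)) :
    p.1 = ⊥ ∨ p.2 = ⊥ := by
  by_contra! hp
  have := Set.Iic.nontrivial_of_ne_bot hp.1
  have := Set.Iic.nontrivial_of_ne_bot hp.2
  exact h ⟨_, _, _, _, inferInstance, inferInstance, ⟨OrderIso.IicProd p⟩⟩

theorem bot_notMem_elemDivisors {α : Type*} [PartialOrder α] [OrderBot α] [Finite α] {a : α}
    (ha : a ≠ ⊥) : ⊥ ∉ elemDivisors a := fun h => by
  obtain ⟨t, ht, hta⟩ := (eq_bot_or_exists_atom_le a).resolve_left ha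
  exact ht.1 (h.2.2 t ht.isIrredElem hta bot_le)

theorem mem_maxBelow_of_le {α : Type*} [PartialOrder α] {G : Set α} {x a p : α}
    (hp : p ∈ maxBelow G x) (hpa : p ≤ a) (hax : a ≤ x) : p ∈ maxBelow G a :=
  ⟨hp.1, hpa, fun q hq hqa => hp.2.2 q hq (hqa.trans hax)⟩

section IntervalProduct

variable {α : Type*} [PartialOrder α] [OrderBot α]

/-- `[⊥, x]` is the internal product of its subintervals `[⊥, a]` and `[⊥, b]`. -/
def IsIntervalProduct (a b x : α) : Prop :=
  ∃ ψ : Iic a × Iic b ≃o Iic x, (∀ u, (ψ (u, ⊥) : α) = u) ∧ ∀ v, (ψ (⊥, v) : α) = v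

variable {a b x : α}

namespace IsIntervalProduct

theorem symm (h : IsIntervalProduct a b x) : IsIntervalProduct b a x :=
  let ⟨ψ, hl, hr⟩ := h
  ⟨(OrderIso.prodComm).trans ψ, hr, hl⟩

theorem left_le (h : IsIntervalProduct a b x) : a ≤ x :=
  let ⟨ψ, hl, _⟩ := h
  (hl ⊤).symm.trans_le (ψ (⊤, ⊥)).2

theorem eq_bot_of_le_of_le (h : IsIntervalProduct a b x) {y : α} (hya : y ≤ a) (hyb : y ≤ b) :
    y = ⊥ := by
  obtain ⟨ψ, hl, hr⟩ := h
  have : ψ (⟨y, hya⟩, ⊥) = ψ (⊥, ⟨y, hyb⟩) :=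
    Subtype.ext ((hl ⟨y, hya⟩).trans (hr ⟨y, hyb⟩).symm)
  exact congrArg (fun p => ((Prod.fst p : Iic a) : α)) (ψ.injective this)

theorem le_or_le_of_isIrredElem (h : IsIntervalProduct a b x) {y : α} (hyx : y ≤ x)
    (hy : IsIrredElem y) : y ≤ a ∨ y ≤ b := by
  obtain ⟨ψ, hl, hr⟩ := h
  set w := ψ.symm ⟨y, hyx⟩
  have hψw : ψ (w.1, w.2) = ⟨y, hyx⟩ := ψ.apply_symm_apply _
  have hw : IsIrreduciblePoset (Iic w) :=
    hy.of_orderIso ((OrderIso.IicIic hyx).symm.trans (ψ.symm.mapIic _))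
  rcases hw.fst_eq_bot_or_snd_eq_bot with hw1 | hw2
  · right
    rw [hw1] at hψw
    have hyw : y = w.2 := by simpa [hψw] using hr w.2
    exact hyw.trans_le w.2.2
  · left
    rw [hw2] at hψw
    have hyw : y = w.1 := by simpa [hψw] using hl w.1
    exact hyw.trans_le w.1.2

theorem elemDivisors_subset (h : IsIntervalProduct a b x) :
    elemDivisors x ⊆ elemDivisors a ∪ elemDivisors b := fun _ hp =>
  (h.le_or_le_of_isIrredElem hp.2.1 hp.1).imp (mem_maxBelow_of_le hp · h.left_le)
    (mem_maxBelow_of_le hp · h.symm.left_le)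

theorem map {β : Type*} [PartialOrder β] [OrderBot β] (h : IsIntervalProduct a b x)
    (e : α ≃o β) : IsIntervalProduct (e a) (e b) (e x) := by
  obtain ⟨ψ, hl, hr⟩ := h
  refine ⟨((e.mapIic a).symm.prodCongr (e.mapIic b).symm).trans (ψ.trans (e.mapIic x)),
    fun u => ?_, fun v => ?_⟩
  · simp [OrderIso.prodCongr, OrderIso.mapIic, hl]
  · simp [OrderIso.prodCongr, OrderIso.mapIic, hr]

end IsIntervalProduct

end IntervalProduct

theorem IsIntervalProduct.of_Iic {α : Type*} [PartialOrder α] [OrderBot α] {x : α}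
    {a b : Iic x} (h : IsIntervalProduct a b ⊤) : IsIntervalProduct (a : α) b x := by
  obtain ⟨ψ, hl, hr⟩ := h
  refine ⟨((OrderIso.IicIic a.2).symm.prodCongr (OrderIso.IicIic b.2).symm).trans
    (ψ.trans OrderIso.IicTop), ?_, ?_⟩
  exacts [fun u => congrArg Subtype.val (hl _), fun v => congrArg Subtype.val (hr _)]

theorem isIntervalProduct_prod {α β : Type*} [PartialOrder α] [PartialOrder β]
    [BoundedOrder α] [BoundedOrder β] :
    IsIntervalProduct ((⊤, ⊥) : α × β) (⊥, ⊤) ⊤ :=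
  ⟨((OrderIso.IicProdBot ⊤).prodCongr
        (((OrderIso.prodComm : α × β ≃o β × α).mapIic (⊥, ⊤)).trans (OrderIso.IicProdBot ⊤))).trans
      ((OrderIso.IicTop.prodCongr OrderIso.IicTop).trans OrderIso.IicTop.symm),
    fun u => Prod.ext rfl (le_bot_iff.mp u.2.2).symm,
    fun v => Prod.ext (le_bot_iff.mp v.2.1).symm rfl⟩

theorem exists_isIntervalProduct_of_not_isIrredElem {α : Type*} [PartialOrder α] [OrderBot α]
    {x : α} (hx : ¬ IsIrredElem x) : ∃ a b, a ≠ ⊥ ∧ b ≠ ⊥ ∧ IsIntervalProduct a b x := by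
  obtain ⟨A, B, _, _, _, _, ⟨e⟩⟩ := not_not.mp hx
  let := e.fstBoundedOrder
  let := (e.trans OrderIso.prodComm).fstBoundedOrder
  have h := (isIntervalProduct_prod (α := A) (β := B)).map e.symm
  rw [e.symm.map_top] at h
  refine ⟨_, _, ?_, ?_, h.of_Iic⟩ <;> simp [Prod.ext_iff]

section Decomposition

variable {α : Type*} [PartialOrder α] [OrderBot α]

def HasElemDivisorDecomposition (x : α) : Prop :=
  ∃ φ : ((y : elemDivisors x) → Iic (y : α)) ≃o Iic x,
    ∀ y, (φ (deltaTuple {z | IsIrredElem z} x y) : α) = y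

variable {a b x : α}

theorem IsIrredElem.hasElemDivisorDecomposition (hx : IsIrredElem x) :
    HasElemDivisorDecomposition x := by
  have hxx : x ∈ elemDivisors x := ⟨hx, le_rfl, fun _ _ => le_antisymm⟩
  have hval (y : elemDivisors x) : (y : α) = x := (y.2.2.2 x hx le_rfl y.2.2.1).symm
  let _ : Unique (elemDivisors x) := ⟨⟨⟨x, hxx⟩⟩, fun y => Subtype.ext (hval y)⟩
  refine ⟨OrderIso.piUnique _, fun y => ?_⟩
  simp [OrderIso.piUnique, deltaTuple, hval]

variable [Finite α]

namespace IsIntervalProduct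

theorem elemDivisors_left_subset (h : IsIntervalProduct a b x) (ha : a ≠ ⊥) :
    elemDivisors a ⊆ elemDivisors x := fun p hp => by
  refine ⟨hp.1, hp.2.1.trans h.left_le, fun q hq hqx hpq => ?_⟩
  rcases h.le_or_le_of_isIrredElem hqx hq with hqa | hqb
  · exact hp.2.2 q hq hqa hpq
  · have hp_bot : p = ⊥ := h.eq_bot_of_le_of_le hp.2.1 (hpq.trans hqb)
    exact absurd (hp_bot ▸ hp : (⊥ : α) ∈ elemDivisors a) (bot_notMem_elemDivisors ha)

theorem elemDivisors_eq (h : IsIntervalProduct a b x) (ha : a ≠ ⊥) (hb : b ≠ ⊥) :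
    elemDivisors x = elemDivisors a ∪ elemDivisors b :=
  h.elemDivisors_subset.antisymm
    (union_subset (h.elemDivisors_left_subset ha) (h.symm.elemDivisors_left_subset hb))

theorem disjoint_elemDivisors (h : IsIntervalProduct a b x) (ha : a ≠ ⊥) :
    Disjoint (elemDivisors a) (elemDivisors b) :=
  disjoint_left.mpr fun _ hpa hpb =>
    bot_notMem_elemDivisors ha (h.eq_bot_of_le_of_le hpa.2.1 hpb.2.1 ▸ hpa)

theorem card_Iic_left_lt (h : IsIntervalProduct a b x) (hb : b ≠ ⊥) :
    Nat.card (Iic a) < Nat.card (Iic x) := by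
  obtain ⟨ψ, -⟩ := h
  have := Set.Iic.nontrivial_of_ne_bot hb
  rw [← Nat.card_congr ψ.toEquiv, Nat.card_prod]
  exact lt_mul_of_one_lt_right Nat.card_pos Finite.one_lt_card

theorem hasElemDivisorDecomposition (h : IsIntervalProduct a b x) (ha : a ≠ ⊥) (hb : b ≠ ⊥)
    (hA : HasElemDivisorDecomposition a) (hB : HasElemDivisorDecomposition b) :
    HasElemDivisorDecomposition x := by
  obtain ⟨φa, hφa⟩ := hA
  obtain ⟨φb, hφb⟩ := hB
  have hU := h.elemDivisors_eq ha hb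
  have hST := h.disjoint_elemDivisors ha
  obtain ⟨ψ, hl, hr⟩ := h
  refine ⟨(OrderIso.piSplit hU hST (fun y => Iic y)).trans ((φa.prodCongr φb).trans ψ),
    fun y => ?_⟩
  rcases hU.subset y.2 with hy | hy
  · have hsplit : OrderIso.piSplit hU hST (fun y => Iic y) (deltaTuple _ x y)
        = (deltaTuple _ a ⟨y, hy⟩, ⊥) := by
      refine Prod.ext (funext fun p => rfl) (funext fun p => if_neg ?_)
      exact fun hpy => hST.notMem_of_mem_left hy (hpy ▸ p.2)
    simp [hsplit, OrderIso.prodCongr, hl, hφa]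
  · have hsplit : OrderIso.piSplit hU hST (fun y => Iic y) (deltaTuple _ x y)
        = (⊥, deltaTuple _ b ⟨y, hy⟩) := by
      refine Prod.ext (funext fun p => if_neg ?_) (funext fun p => rfl)
      exact fun hpy => hST.notMem_of_mem_right hy (hpy ▸ p.2)
    simp [hsplit, OrderIso.prodCongr, hr, hφb]

end IsIntervalProduct

theorem hasElemDivisorDecomposition (x : α) : HasElemDivisorDecomposition x := by
  induction hn : Nat.card (Iic x) using Nat.strong_induction_on generalizing x with
  | _ n ih =>
  by_cases hx : IsIrredElem x
  · exact hx.hasElemDivisorDecomposition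
  obtain ⟨a, b, ha, hb, h⟩ := exists_isIntervalProduct_of_not_isIrredElem hx
  exact h.hasElemDivisorDecomposition ha hb (ih _ (hn ▸ h.card_Iic_left_lt hb) a rfl)
    (ih _ (hn ▸ h.symm.card_Iic_left_lt ha) b rfl)

end Decomposition

/-- for a finite poset with a unique minimal element, the interval below any
element decomposes as the product of the intervals below its elementary divisors, via an
isomorphism sending delta tuples to the corresponding elementary divisors; moreover the
intervals below elementary divisors are irreducible. -/
theorem elemDivisors_decomposition {P : Type u} [PartialOrder P] [Fintype P] [OrderBot P]
    (x : P) :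
    (∃ φ : ((y : elemDivisors x) → Set.Iic (y : P)) ≃o Set.Iic x,
        ∀ y : elemDivisors x,
          ((φ (deltaTuple {z | IsIrredElem z} x y) : Set.Iic x) : P) = (y : P)) ∧
    (∀ y ∈ elemDivisors x, IsIrreduciblePoset (Set.Iic y)) :=
  ⟨hasElemDivisorDecomposition x, fun _ hy => hy.1⟩
end

section
/- Let L be a finite meet-semilattice and G ⊆ L \ {0̂}. Then G is a building set of L if and only if: (a) every element of L \ {0̂} is a join of elements of G, and (b) for any x ∈ L, any pairwise distinct elements y, y₁, …, y_t of max G_{≤x}, and any z ∈ L with z < y, one has G_{≤y} ∩ G_{≤ z∨y₁∨…∨y_t} = G_{≤z}. -/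
attribute [local instance] Classical.propDecidable

universe u

/-- `G` is a (combinatorial) building set: `G` avoids the bottom element, and for every
`x ≠ ⊥` the interval `[⊥, x]` decomposes as the product of the intervals below the maximal
elements of `G` below `x`, via an isomorphism sending delta tuples to the corresponding
maximal elements. -/
def IsBuilding {L : Type u} [PartialOrder L] [OrderBot L] (G : Set L) : Prop :=
  (∀ g ∈ G, g ≠ ⊥) ∧
  ∀ x : L, x ≠ ⊥ →
    ∃ φ : ((h : maxBelow G x) → Set.Iic (h : L)) ≃o Set.Iic x,
      ∀ g : maxBelow G x, ((φ (deltaTuple G x g) : Set.Iic x) : L) = (g : L)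

/-!
Everything is governed by the canonical map `w ↦ (w ⊓ h)_h` from `[⊥, x]` to the product of
intervals `[⊥, h]`, `h` maximal in `G` below `x`. An isomorphism `φ` as in the definition of a
building set forces this map to be an order embedding, because the `h`-coordinate of `φ⁻¹ w`
depends only on `w ⊓ h` (as `φ⁻¹` preserves meets and sends `h` to its delta tuple); counting
then makes it bijective. Once the canonical map is an isomorphism, `x` is the join of the maximal
elements, and the element `w` with `w ⊓ y = z` and `w ⊓ h = h` for the other `h` is an upper
bound of `z` and `T`, whence `j ⊓ y = z`, which is the trace condition.

Conversely, join generation gives `a ≤ b` as soon as every element of `G` below `a` is below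
`b`; this makes the canonical map order reflecting. Given `c_h ≤ h`, let `w` be the join of the
`c_h`; the trace condition for `y = h`, `z = c_h` and `T` the other maximal elements shows that
every element of `G` below `w ⊓ h` is below `c_h`, so the canonical map is surjective.
-/

open Set Function

variable {L : Type u} [SemilatticeInf L] {G : Set L} {x : L}

theorem exists_isLUB_of_mem_upperBounds [Finite L] {S : Set L} {u : L}
    (hu : u ∈ upperBounds S) : ∃ j, IsLUB S j := by
  have hne : (upperBounds S).toFinite.toFinset.Nonempty := ⟨u, by simpa using hu⟩
  refine ⟨_, fun s hs => Finset.le_inf' hne id fun v hv => ?_, fun v hv => Finset.inf'_le id ?_⟩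
  · exact (Set.Finite.mem_toFinset _).1 hv hs
  · simpa using hv

omit [SemilatticeInf L] in
theorem exists_mem_maxBelow_le [PartialOrder L] [Finite L] {g : L} (hg : g ∈ G) (hgx : g ≤ x) :
    ∃ h ∈ maxBelow G x, g ≤ h := by
  obtain ⟨h, hgh, hmax⟩ := Finite.exists_le_maximal (p := (· ∈ G ∩ Iic x)) ⟨hg, hgx⟩
  exact ⟨h, ⟨hmax.1.1, hmax.1.2, fun k hk hkx hhk => (hmax.2 ⟨hk, hkx⟩ hhk).antisymm hhk⟩,
    hgh⟩

theorem sep_le_inter_sep_le (a b : L) :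
    {g ∈ G | g ≤ a} ∩ {g ∈ G | g ≤ b} = {g ∈ G | g ≤ a ⊓ b} := by
  ext g
  simp only [mem_inter_iff, mem_sep_iff, le_inf_iff]
  tauto

variable (G x) in
def infMaxBelow (w : Iic x) (h : maxBelow G x) : Iic (h : L) :=
  ⟨w ⊓ h, inf_le_right⟩

@[simp]
theorem coe_infMaxBelow (w : Iic x) (h : maxBelow G x) :
    (infMaxBelow G x w h : L) = (w : L) ⊓ h :=
  rfl

theorem infMaxBelow_mono : Monotone (infMaxBelow G x) :=
  fun _ _ hab _ => inf_le_inf_right _ hab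

section OfBuilding

variable [OrderBot L] (φ : ((h : maxBelow G x) → Iic (h : L)) ≃o Iic x)
  (hφ : ∀ g : maxBelow G x, (φ (deltaTuple G x g) : L) = g)
include hφ

theorem symm_apply_eq_deltaTuple (g : maxBelow G x) : φ.symm ⟨g, g.2.2.1⟩ = deltaTuple G x g :=
  φ.symm_apply_eq.2 (Subtype.ext (hφ g).symm)

theorem symm_apply_inf_maxBelow (w : Iic x) (h : maxBelow G x) :
    φ.symm ⟨(w : L) ⊓ h, inf_le_left.trans w.2⟩ h = φ.symm w h := by
  have : (⟨(w : L) ⊓ h, inf_le_left.trans w.2⟩ : Iic x) = w ⊓ ⟨h, h.2.2.1⟩ := rfl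
  rw [this, φ.symm.map_inf, symm_apply_eq_deltaTuple φ hφ, Pi.inf_apply, deltaTuple, if_pos rfl]
  exact inf_eq_left.2 le_top

theorem infMaxBelow_le_iff_of_building (a b : Iic x) :
    infMaxBelow G x a ≤ infMaxBelow G x b ↔ a ≤ b := by
  refine ⟨fun hab => φ.symm.le_iff_le.1 fun h => ?_, fun hab => infMaxBelow_mono hab⟩
  rw [← symm_apply_inf_maxBelow φ hφ a, ← symm_apply_inf_maxBelow φ hφ b]
  exact φ.symm.monotone (hab h) h

theorem exists_orderIso_infMaxBelow_of_building [Finite L] :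
    ∃ e : Iic x ≃o ((h : maxBelow G x) → Iic (h : L)), ⇑e = infMaxBelow G x := by
  let f := OrderEmbedding.ofMapLEIff _ (infMaxBelow_le_iff_of_building φ hφ)
  have hsurj : Surjective f :=
    (f.injective.bijective_of_nat_card_le (Nat.card_congr φ.toEquiv).le).2
  exact ⟨.ofSurjective f hsurj, rfl⟩

end OfBuilding

section OfSplitting

variable (e : Iic x ≃o ((h : maxBelow G x) → Iic (h : L))) (he : ⇑e = infMaxBelow G x)
include he

theorem isLUB_maxBelow : IsLUB (maxBelow G x) x := by
  refine ⟨fun g hg => hg.2.1, fun u hu => ?_⟩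
  have : e ⊤ ≤ e ⟨x ⊓ u, inf_le_left⟩ := by
    rw [he]
    exact fun h => show x ⊓ h ≤ x ⊓ u ⊓ h from
      le_inf (le_inf inf_le_left (inf_le_right.trans (hu h.2))) inf_le_right
  exact (Subtype.coe_le_coe.2 (e.le_iff_le.1 this)).trans inf_le_right

variable [OrderBot L]

theorem symm_apply_deltaTuple (g : maxBelow G x) :
    e.symm (deltaTuple G x g) = ⟨g, g.2.2.1⟩ := by
  have hv : infMaxBelow G x (e.symm (deltaTuple G x g)) = deltaTuple G x g := by
    rw [← he, e.apply_symm_apply]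
  apply le_antisymm
  · refine e.le_iff_le.1 fun h => ?_
    rw [e.apply_symm_apply, he, deltaTuple]
    split_ifs with hhg
    · exact Subtype.mk_le_mk.2 (le_inf (hhg ▸ le_rfl) le_rfl)
    · exact bot_le
  · have := congrArg (fun t => (t g : L)) hv
    simp only [coe_infMaxBelow, deltaTuple, if_true] at this
    exact Subtype.coe_le_coe.1 (inf_eq_right.1 this)

theorem inf_eq_bot_of_mem_maxBelow {g h : maxBelow G x} (hgh : g ≠ h) : (g : L) ⊓ h = ⊥ := by
  have := congrArg (fun t => (t h : L)) (e.apply_symm_apply (deltaTuple G x g))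
  simpa [he, symm_apply_deltaTuple e he, deltaTuple, Subtype.coe_ne_coe.2 hgh.symm] using this

theorem inf_eq_of_isLUB_insert (y : maxBelow G x) {T : Set L} (hT : T ⊆ maxBelow G x)
    (hyT : (y : L) ∉ T) {z j : L} (hzy : z ≤ y) (hj : IsLUB (insert z T) j) : j ⊓ y = z := by
  set w := e.symm (update ⊤ y ⟨z, hzy⟩)
  have hwy : (w : L) ⊓ y = z := by
    have := congrFun (e.apply_symm_apply (update ⊤ y ⟨z, hzy⟩)) y
    rw [he, update_self] at this
    exact congrArg Subtype.val this
  have hub : ∀ v : Iic x, (v : L) ⊓ y ≤ z → (v : L) ≤ w := fun v hv =>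
    e.le_iff_le.1 (by rw [e.apply_symm_apply, he, le_update_iff]; exact ⟨hv, fun _ _ => le_top⟩)
  have hzw : z ≤ w := hub ⟨z, hzy.trans y.2.2.1⟩ inf_le_left
  have hTw : ∀ t ∈ T, t ≤ w := fun t ht => by
    have hty : (⟨t, hT ht⟩ : maxBelow G x) ≠ y := fun hty =>
      hyT (congrArg Subtype.val hty ▸ ht)
    exact hub ⟨t, (hT ht).2.1⟩ ((inf_eq_bot_of_mem_maxBelow e he hty).trans_le bot_le)
  refine le_antisymm ?_ (le_inf (hj.1 (mem_insert z T)) hzy)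
  exact hwy ▸ inf_le_inf_right _ (hj.2 (forall_insert_of_forall hTw hzw))

end OfSplitting

section OfJoinGenerates

variable [OrderBot L] (ha : ∀ x : L, x ≠ ⊥ → ∃ S : Set L, S ⊆ G ∧ IsLUB S x)
include ha

theorem le_of_forall_mem_le_imp_le {a b : L} (hab : ∀ g ∈ G, g ≤ a → g ≤ b) :
    a ≤ b := by
  rcases eq_or_ne a ⊥ with rfl | ha0
  · exact bot_le
  obtain ⟨S, hSG, hS⟩ := ha a ha0
  exact hS.2 fun s hs => hab s (hSG hs) (hS.1 hs)

variable [Finite L]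

theorem infMaxBelow_le_iff_of_joinGenerates (a b : Iic x) :
    infMaxBelow G x a ≤ infMaxBelow G x b ↔ a ≤ b := by
  refine ⟨fun hab => le_of_forall_mem_le_imp_le ha fun g hg hga => ?_,
    fun hab => infMaxBelow_mono hab⟩
  obtain ⟨h, hh, hgh⟩ := exists_mem_maxBelow_le hg (hga.trans a.2)
  exact (le_inf hga hgh).trans ((Subtype.coe_le_coe.2 (hab ⟨h, hh⟩)).trans inf_le_left)

variable
  (hb : ∀ x : L, ∀ y ∈ maxBelow G x, ∀ T : Finset L, ↑T ⊆ maxBelow G x → y ∉ T →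
    ∀ z : L, z < y → ∀ j : L, IsLUB (insert z (↑T : Set L)) j →
      {g ∈ G | g ≤ y} ∩ {g ∈ G | g ≤ j} = {g ∈ G | g ≤ z})
include hb

theorem infMaxBelow_surjective_of_trace : Surjective (infMaxBelow G x) := by
  intro u
  have hux : x ∈ upperBounds (range fun h => (u h : L)) := by
    rintro _ ⟨h, rfl⟩
    exact (u h).2.trans h.2.2.1
  obtain ⟨w, hw⟩ := exists_isLUB_of_mem_upperBounds hux
  refine ⟨⟨w, hw.2 hux⟩, funext fun h => Subtype.ext <|
    le_antisymm ?_ (le_inf (hw.1 ⟨h, rfl⟩) (u h).2)⟩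
  change w ⊓ h ≤ u h
  rcases (u h).2.eq_or_lt with huh | huh
  · rw [huh]
    exact inf_le_right
  set T := (maxBelow G x \ {(h : L)}).toFinite.toFinset
  have hT : (T : Set L) = maxBelow G x \ {(h : L)} := Finite.coe_toFinset _
  have hinsx : x ∈ upperBounds (insert (u h : L) (T : Set L)) := by
    rw [hT]
    exact forall_insert_of_forall (fun t ht => ht.1.2.1) ((u h).2.trans h.2.2.1)
  obtain ⟨j, hj⟩ := exists_isLUB_of_mem_upperBounds hinsx
  have hwj : w ≤ j := hw.2 <| by
    rintro _ ⟨h', rfl⟩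
    rcases eq_or_ne h' h with rfl | hne
    · exact hj.1 (mem_insert _ _)
    · exact (u h').2.trans <|
        hj.1 (mem_insert_of_mem _ (hT ▸ ⟨h'.2, Subtype.coe_ne_coe.2 hne⟩))
  have htrace := hb x h h.2 T (hT ▸ sdiff_subset) (by simp [T]) _ huh j hj
  rw [sep_le_inter_sep_le] at htrace
  refine le_of_forall_mem_le_imp_le ha fun g hg hgwh => ?_
  have hg' : g ∈ {g ∈ G | g ≤ (h : L) ⊓ j} :=
    ⟨hg, le_inf (hgwh.trans inf_le_right) (hgwh.trans (inf_le_left.trans hwj))⟩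
  exact (htrace ▸ hg').2

theorem exists_orderIso_infMaxBelow_of_trace :
    ∃ e : Iic x ≃o ((h : maxBelow G x) → Iic (h : L)), ⇑e = infMaxBelow G x :=
  ⟨.ofSurjective (.ofMapLEIff _ (infMaxBelow_le_iff_of_joinGenerates ha))
    (infMaxBelow_surjective_of_trace ha hb), rfl⟩

end OfJoinGenerates

/-- characterization of building sets, Proposition 2.3 (3). -/
theorem isBuilding_iff_join_generates_and_trace_condition {L : Type u} [SemilatticeInf L]
    [Fintype L] [OrderBot L] (G : Set L) (hG0 : ∀ g ∈ G, g ≠ ⊥) :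
    IsBuilding G ↔
      ((∀ x : L, x ≠ ⊥ → ∃ S : Set L, S ⊆ G ∧ IsLUB S x) ∧
       (∀ x : L, ∀ y ∈ maxBelow G x, ∀ T : Finset L, ↑T ⊆ maxBelow G x → y ∉ T →
          ∀ z : L, z < y → ∀ j : L, IsLUB (insert z (↑T : Set L)) j →
            {g ∈ G | g ≤ y} ∩ {g ∈ G | g ≤ j} = {g ∈ G | g ≤ z})) := by
  constructor
  · rintro ⟨-, hbuild⟩
    have hsplit (x : L) (hx : x ≠ ⊥) :
        ∃ e : Iic x ≃o ((h : maxBelow G x) → Iic (h : L)), ⇑e = infMaxBelow G x :=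
      let ⟨φ, hφ⟩ := hbuild x hx
      exists_orderIso_infMaxBelow_of_building φ hφ
    refine ⟨fun x hx => ?_, fun x y hy T hT hyT z hz j hj => ?_⟩
    · obtain ⟨e, he⟩ := hsplit x hx
      exact ⟨_, fun g hg => hg.1, isLUB_maxBelow e he⟩
    · obtain ⟨e, he⟩ := hsplit x (ne_bot_of_le_ne_bot (hG0 y hy.1) hy.2.1)
      rw [sep_le_inter_sep_le, inf_comm, inf_eq_of_isLUB_insert e he ⟨y, hy⟩ hT hyT hz.le hj]
  · rintro ⟨ha, hb⟩
    refine ⟨hG0, fun x _ => ?_⟩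
    obtain ⟨e, he⟩ := exists_orderIso_infMaxBelow_of_trace (x := x) ha hb
    exact ⟨e.symm, fun g => congrArg Subtype.val (symm_apply_deltaTuple e he g)⟩
end

section
/- Let L be a finite meet-semilattice, G a building set of L, x ∈ L \ {0̂}, and F(x) = {x₁,…,x_k} the set of factors of x in G. Then for every y ∈ G with 0̂ ≠ y ≤ x there exists a unique index j ∈ {1,…,k} such that y ≤ x_j; that is, F(x) induces a partition of G_{≤x}. -/
attribute [local instance] Classical.propDecidable

universe u

section Factors

variable {L : Type u} [PartialOrder L] {G : Set L} {x : L}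

theorem Maximal.mem_maxBelow {g : L} (hg : Maximal (fun h => h ∈ G ∧ h ≤ x) g) :
    g ∈ maxBelow G x :=
  ⟨hg.prop.1, hg.prop.2, fun _ hhG hhx hgh => le_antisymm (hg.2 ⟨hhG, hhx⟩ hgh) hgh⟩

theorem exists_mem_maxBelow_ge [Finite L] {y : L} (hyG : y ∈ G) (hyx : y ≤ x) :
    ∃ g ∈ maxBelow G x, y ≤ g := by
  obtain ⟨g, hyg, hg⟩ := Finite.exists_le_maximal (p := fun h => h ∈ G ∧ h ≤ x) ⟨hyG, hyx⟩
  exact ⟨g, hg.mem_maxBelow, hyg⟩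

variable [OrderBot L]

theorem eq_bot_of_le_deltaTuple {g g' : maxBelow G x} (hne : (g : L) ≠ g')
    {a : (h : maxBelow G x) → Set.Iic (h : L)}
    (hag : a ≤ deltaTuple G x g) (hag' : a ≤ deltaTuple G x g') : a = ⊥ := by
  refine le_bot_iff.mp fun h => ?_
  by_cases hhg : (h : L) = g
  · have hhg' : (h : L) ≠ g' := hhg ▸ hne
    have := hag' h
    rwa [deltaTuple, if_neg hhg'] at this
  · have := hag h
    rwa [deltaTuple, if_neg hhg] at this

/-- In a building set, distinct factors of `x` have only `⊥` as a common lower bound: under the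
product decomposition of `[⊥, x]` they sit in different coordinates. -/
theorem IsBuilding.eq_bot_of_le_of_le (hG : IsBuilding G) (hx : x ≠ ⊥)
    {g g' : L} (hg : g ∈ maxBelow G x) (hg' : g' ∈ maxBelow G x) (hne : g ≠ g')
    {y : L} (hyg : y ≤ g) (hyg' : y ≤ g') : y = ⊥ := by
  obtain ⟨φ, hφ⟩ := hG.2 x hx
  have hyx : y ≤ x := hyg.trans hg.2.1
  have below_delta : ∀ f : maxBelow G x, y ≤ f → φ.symm ⟨y, hyx⟩ ≤ deltaTuple G x f := by
    intro f hyf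
    rw [OrderIso.symm_apply_le, ← Subtype.coe_le_coe, hφ f]
    exact hyf
  have hbot : φ.symm ⟨y, hyx⟩ = ⊥ :=
    eq_bot_of_le_deltaTuple (g := ⟨g, hg⟩) (g' := ⟨g', hg'⟩) hne
      (below_delta _ hyg) (below_delta _ hyg')
  rw [OrderIso.symm_apply_eq, OrderIso.map_bot] at hbot
  exact congrArg Subtype.val hbot

end Factors

/-- the factors of `x` in a building set partition the elements of `G`
below `x`: every `⊥ ≠ y ∈ G` with `y ≤ x` lies below a unique factor. -/
theorem factors_partition_building_set_below {L : Type u} [SemilatticeInf L] [Fintype L]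
    [OrderBot L] (G : Set L) (hG : IsBuilding G) (x : L) (hx : x ≠ ⊥) :
    ∀ y ∈ G, y ≠ ⊥ → y ≤ x → ∃! g : L, g ∈ maxBelow G x ∧ y ≤ g := by
  intro y hyG hy0 hyx
  obtain ⟨m, hm, hym⟩ := exists_mem_maxBelow_ge hyG hyx
  refine ⟨m, ⟨hm, hym⟩, fun g ⟨hg, hyg⟩ => ?_⟩
  by_contra hne
  exact hy0 (hG.eq_bot_of_le_of_le hx hg hm hne hyg hym)
end

section
/- Let L be a finite meet-semilattice, G a building set of L, x ∈ L \ {0̂}, and F(x) the set of factors of x in G. Then ⋁F(x) = x, and for every x₀ ∈ F(x) one has ⋁(F(x) \ {x₀}) < x (where the join of the empty set is 0̂); that is, each factor of x is needed to generate x. -/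
attribute [local instance] Classical.propDecidable

universe u

/-- the factors of `x` join to `x`, and each factor is needed:
omitting any factor gives a join strictly below `x`. -/
theorem factors_join_and_each_needed {L : Type u} [SemilatticeInf L] [Fintype L]
    [OrderBot L] (G : Set L) (hG : IsBuilding G) (x : L) (hx : x ≠ ⊥) :
    IsLUB (maxBelow G x) x ∧
    ∀ x0 ∈ maxBelow G x, ∃ j : L, IsLUB (maxBelow G x \ {x0}) j ∧ j < x := by
  obtain ⟨hGbot, hiso⟩ := hG
  obtain ⟨φ, hφd⟩ := hiso x hx
  -- key: from an element z ≤ x above a set of factors, the preimage dominates delta tuples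
  have hdelta_le : ∀ (z : L) (hzx : z ≤ x) (g : maxBelow G x), (g : L) ≤ z →
      deltaTuple G x g ≤ φ.symm ⟨z, hzx⟩ := by
    intro z hzx g hgz
    rw [OrderIso.le_symm_apply]
    show ((φ (deltaTuple G x g)) : L) ≤ z
    rw [hφd g]
    exact hgz
  constructor
  · constructor
    · exact fun g hg => hg.2.1
    · intro y hy
      have hzx : y ⊓ x ≤ x := inf_le_right
      have hge : ∀ g : maxBelow G x, deltaTuple G x g ≤ φ.symm ⟨y ⊓ x, hzx⟩ := by
        intro g
        exact hdelta_le _ hzx g (le_inf (hy g.2) g.2.2.1)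
      have hT : (fun h : maxBelow G x => (⟨(h : L), le_rfl⟩ : Set.Iic (h : L))) ≤
          φ.symm ⟨y ⊓ x, hzx⟩ := by
        intro h
        have := hge h h
        simpa [deltaTuple] using this
      have hx_le : φ.symm ⟨x, le_rfl⟩ ≤ φ.symm ⟨y ⊓ x, hzx⟩ := by
        refine le_trans (fun h => ?_) hT
        exact (φ.symm ⟨x, le_rfl⟩ h).2
      have := φ.symm.le_iff_le.mp hx_le
      have hxz : x ≤ y ⊓ x := by exact_mod_cast this
      exact le_trans hxz inf_le_left
  · intro x0 hx0
    set S : (h : maxBelow G x) → Set.Iic (h : L) :=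
      fun h => if (h : L) = x0 then ⟨⊥, bot_le⟩ else ⟨(h : L), le_rfl⟩ with hS
    refine ⟨((φ S : Set.Iic x) : L), ⟨?_, ?_⟩, ?_⟩
    · -- upper bound
      intro g hg
      obtain ⟨hgm, hgne⟩ := hg
      have hdS : deltaTuple G x ⟨g, hgm⟩ ≤ S := by
        intro h
        simp only [deltaTuple, hS]
        by_cases hhg : (h : L) = g
        · have hgx0 : g ≠ x0 := fun hc => hgne (by simpa using hc)
          simp [hhg, hgx0]
        · simp only [hhg, if_neg]
          exact bot_le
      have := φ.le_iff_le.mpr hdS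
      calc g = ((φ (deltaTuple G x ⟨g, hgm⟩)) : L) := (hφd ⟨g, hgm⟩).symm
        _ ≤ ((φ S : Set.Iic x) : L) := this
    · -- least upper bound
      intro y hy
      have hjx : ((φ S : Set.Iic x) : L) ≤ x := (φ S).2
      have hzx : y ⊓ ((φ S : Set.Iic x) : L) ≤ x := le_trans inf_le_right hjx
      have hge : ∀ g : maxBelow G x, (g : L) ≠ x0 →
          deltaTuple G x g ≤ φ.symm ⟨_, hzx⟩ := by
        intro g hgne
        refine hdelta_le _ hzx g (le_inf (hy ⟨g.2, hgne⟩) ?_)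
        calc (g : L) = ((φ (deltaTuple G x g)) : L) := (hφd g).symm
          _ ≤ ((φ S : Set.Iic x) : L) := by
            refine φ.le_iff_le.mpr fun h => ?_
            simp only [deltaTuple, hS]
            by_cases hhg : (h : L) = g
            · simp [hhg, hgne]
            · simp only [hhg, if_neg]
              exact bot_le
      have hSle : S ≤ φ.symm ⟨_, hzx⟩ := by
        intro h
        by_cases hhx0 : (h : L) = x0
        · simp only [hS, hhx0, if_pos]
          exact bot_le
        · have := hge h hhx0 h
          simp only [deltaTuple, if_pos rfl] at this
          simpa [hS, hhx0] using this
      have := φ.le_iff_le.mpr hSle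
      rw [OrderIso.apply_symm_apply] at this
      exact le_trans (Subtype.coe_le_coe.mpr this) inf_le_left
    · -- strict inequality
      have hjx : ((φ S : Set.Iic x) : L) ≤ x := (φ S).2
      refine lt_of_le_of_ne hjx fun hjeq => ?_
      have hφSx : φ S = ⟨x, le_rfl⟩ := Subtype.ext hjeq
      have hdle : deltaTuple G x ⟨x0, hx0⟩ ≤ S := by
        have : deltaTuple G x ⟨x0, hx0⟩ ≤ φ.symm ⟨x, le_rfl⟩ :=
          hdelta_le x le_rfl ⟨x0, hx0⟩ hx0.2.1
        rwa [← hφSx, OrderIso.symm_apply_apply] at this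
      have := hdle ⟨x0, hx0⟩
      simp only [deltaTuple, if_pos rfl, hS, if_pos rfl] at this
      have hx0bot : x0 ≤ ⊥ := this
      exact hGbot x0 hx0.1 (le_bot_iff.mp hx0bot)
end

section
/- Let L be a finite meet-semilattice and G a building set of L. If h₁,…,h_k ∈ G are such that the join h₁∨…∨h_k exists in L and the half-open interval (h_i, h₁∨…∨h_k] contains no element of G for each i = 1,…,k, then F(h₁∨…∨h_k) = {h₁,…,h_k}. -/
attribute [local instance] Classical.propDecidable

universe u

/-- if `h₁, …, h_k ∈ G` have a join `j` and no element of `G` lies in any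
half-open interval `(h i, j]`, then the set of factors of `j` is `{h₁, …, h_k}`. -/
theorem factors_of_join_of_no_building_between {L : Type u} [SemilatticeInf L] [Fintype L]
    [OrderBot L] (G : Set L) (hG : IsBuilding G) (H : Finset L) (hH : ↑H ⊆ G)
    (j : L) (hj : IsLUB (↑H : Set L) j)
    (hno : ∀ h ∈ H, ∀ g ∈ G, h < g → g ≤ j → False) :
    maxBelow G j = ↑H := by
  obtain ⟨hGbot, hbuild⟩ := hG
  have hHsub : (↑H : Set L) ⊆ maxBelow G j := by
    intro h hh
    refine ⟨hH hh, hj.1 hh, ?_⟩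
    intro g hg hgj hhg
    rcases eq_or_lt_of_le hhg with h1 | h1
    · exact h1.symm
    · exact (hno h (by exact_mod_cast hh) g hg h1 hgj).elim
  refine Set.Subset.antisymm ?_ hHsub
  intro m hm
  by_contra hmH
  have hjne : j ≠ ⊥ := by
    intro hjb
    exact hGbot m hm.1 (le_bot_iff.mp (hjb ▸ hm.2.1))
  obtain ⟨φ, hφ⟩ := hbuild j hjne
  set y : (h : maxBelow G j) → Set.Iic (h : L) :=
    fun h => if (h : L) = (m : L) then ⟨⊥, bot_le⟩ else ⟨(h : L), le_refl _⟩ with hy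
  have hylt : y < ⊤ := by
    refine lt_of_le_of_ne le_top ?_
    intro hyt
    have h5 : ((y ⟨m, hm⟩ : L)) = ⊥ := by
      simp [hy]
    have h6 : ((y ⟨m, hm⟩ : L)) = m := by rw [hyt]; rfl
    exact hGbot m hm.1 (h6 ▸ h5)
  have hlt : ((φ y : Set.Iic j) : L) < j := by
    have h2 : φ y < φ ⊤ := φ.strictMono hylt
    have h3 : (φ ⊤ : Set.Iic j) = ⊤ := φ.map_top
    rw [h3] at h2
    exact h2
  have hub : j ≤ ((φ y : Set.Iic j) : L) := by
    apply hj.2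
    intro h hh
    have hh' : h ∈ maxBelow G j := hHsub hh
    have hne : (⟨h, hh'⟩ : maxBelow G j) ≠ ⟨m, hm⟩ := by
      intro heq
      apply hmH
      have : h = m := congrArg Subtype.val heq
      exact this ▸ hh
    have hdle : deltaTuple G j ⟨h, hh'⟩ ≤ y := by
      intro c
      simp only [deltaTuple, hy]
      split_ifs with h1 h2
      · exact (hmH ((h1.symm.trans h2) ▸ hh)).elim
      · exact le_refl _
      · exact bot_le
      · exact bot_le
    have := φ.monotone hdle
    have h4 : ((φ (deltaTuple G j ⟨h, hh'⟩) : Set.Iic j) : L) = h := hφ ⟨h, hh'⟩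
    calc h = ((φ (deltaTuple G j ⟨h, hh'⟩) : Set.Iic j) : L) := h4.symm
    _ ≤ ((φ y : Set.Iic j) : L) := this
  exact absurd hub hlt.not_ge
end

section
/- Let L be a finite meet-semilattice, G a building set of L, α a maximal element of G, and G̃ = (G \ {α}) ∪ {[α,0̂]} the corresponding building set of Bl_α L. Then the map sending a subset N ⊆ G to the subset of G̃ obtained by replacing α by [α,0̂] (and fixing all other elements) is a bijection between the nested subsets of G (with respect to L) and the nested subsets of G̃ (with respect to Bl_α L). -/
attribute [local instance] Classical.propDecidable

universe u

/-- A subset `N` of a building set `G` is nested if for every finite set of at least two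
pairwise incomparable elements of `N`, the join exists and does not belong to `G`. -/
def IsNested {L : Type u} [PartialOrder L] (G N : Set L) : Prop :=
  N ⊆ G ∧ ∀ T : Finset L, ↑T ⊆ N → 2 ≤ T.card →
    (∀ a ∈ T, ∀ b ∈ T, a ≠ b → ¬ a ≤ b) →
    ∃ j : L, IsLUB (↑T : Set L) j ∧ j ∉ G

/-- The combinatorial blowup of `L` at `α`: elements are either `y ∈ L` with `y ≱ α`
(encoded `(false, y)`), or symbols `[α, y]` for `y ≱ α` such that `y ∨ α` exists in `L`
(encoded `(true, y)`); the order is induced by the product order on `Bool × L`. -/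
def Blowup (L : Type u) [PartialOrder L] (α : L) : Type u :=
  {p : Bool × L // ¬ α ≤ p.2 ∧ (p.1 = true → ∃ j : L, IsLUB {α, p.2} j)}

noncomputable instance blowupPartialOrder {L : Type u} [PartialOrder L] (α : L) :
    PartialOrder (Blowup L α) :=
  inferInstanceAs (PartialOrder
    {p : Bool × L // ¬ α ≤ p.2 ∧ (p.1 = true → ∃ j : L, IsLUB {α, p.2} j)})

/-- The element of the blowup corresponding to `y ∈ L`, `y ≱ α`. -/
def Blowup.mk1 {L : Type u} [PartialOrder L] {α : L} (y : L) (hy : ¬ α ≤ y) : Blowup L α :=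
  ⟨(false, y), hy, fun hb => Bool.noConfusion hb⟩

/-- The element `[α, y]` of the blowup, for `y ≱ α` such that `y ∨ α` exists. -/
def Blowup.mk2 {L : Type u} [PartialOrder L] {α : L} (y : L) (hy : ¬ α ≤ y)
    (hj : ∃ j : L, IsLUB {α, y} j) : Blowup L α :=
  ⟨(true, y), hy, fun _ => hj⟩

/-- Replacing `α` by `[α, ⊥]` in a subset `N` of `L`, viewed inside the blowup. -/
def liftSet {L : Type u} [PartialOrder L] [OrderBot L] (α : L) (N : Set L) :
    Set (Blowup L α) :=
  {w | (w.val.1 = false ∧ w.val.2 ∈ N ∧ w.val.2 ≠ α) ∨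
       (w.val = (true, (⊥ : L)) ∧ α ∈ N)}

/-!
For `N ⊆ G`, `liftSet α N` is the image of `N` under the injective map `g ↦ g` (`g ≠ α`),
`α ↦ [α, ⊥]`, so it suffices to show that `N` is nested iff its image is. Joins in the blowup
are computed coordinatewise: the join of the image of `T` is `⋁ T` if `α ∉ T` and
`[α, ⋁ (T \ {α})]` if `α ∈ T`. The crux is that `α ≰ ⋁ T` for a nested antichain `T ∌ α`:
by the product decomposition of `[⊥, ⋁ T]`, every maximal element of `G` below `⋁ T` lies in
`T`. When `α ∈ T`, the join `α ∨ ⋁ (T \ {α})` exists because `α` together with the elements of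
`T` not below `α` is again a nested antichain.
-/
section Order
variable {L : Type u}

lemma exists_isLUB_of_bddAbove [SemilatticeInf L] [Finite L] {s : Set L} (hs : BddAbove s) :
    ∃ j, IsLUB s j := by
  have hfin := (upperBounds s).toFinite
  exact ⟨_, isGLB_upperBounds.1 (by simpa using Finset.isGLB_inf' (hfin.toFinset_nonempty.2 hs))⟩

lemma exists_mem_maxBelow [PartialOrder L] [Finite L] {G : Set L} {g x : L}
    (hg : g ∈ G) (hgx : g ≤ x) : ∃ m ∈ maxBelow G x, g ≤ m := by
  obtain ⟨m, hgm, hm⟩ := (G ∩ Set.Iic x).toFinite.exists_le_maximal ⟨hg, hgx⟩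
  exact ⟨m, ⟨hm.1.1, hm.1.2, fun h hh hhx hmh => le_antisymm (hm.2 ⟨hh, hhx⟩ hmh) hmh⟩, hgm⟩

lemma deltaTuple_le_iff [PartialOrder L] [OrderBot L] {G : Set L} {x : L} {g : maxBelow G x}
    {u : (h : maxBelow G x) → Set.Iic (h : L)} : deltaTuple G x g ≤ u ↔ u g = ⊤ := by
  refine ⟨fun h => top_unique ?_, fun hu h => ?_⟩
  · have hg := h g
    rw [deltaTuple, if_pos rfl] at hg
    exact hg
  · unfold deltaTuple
    split_ifs with hh
    · obtain rfl : h = g := Subtype.ext hh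
      exact hu ▸ le_top
    · exact Subtype.mk_le_mk.2 bot_le

end Order

section Building
variable {L : Type u} [PartialOrder L] {G N : Set L}

lemma IsBuilding.eq_of_isLUB [OrderBot L] (hG : IsBuilding G) {j m₀ w : L}
    (hm₀ : m₀ ∈ maxBelow G j) (hw : w ≤ m₀)
    (hlub : IsLUB (insert w (maxBelow G j \ {m₀})) j) : w = m₀ := by
  obtain ⟨φ, hφ⟩ := hG.2 j fun hj => hG.1 m₀ hm₀.1 (le_bot_iff.1 (hj ▸ hm₀.2.1))
  set m : maxBelow G j := ⟨m₀, hm₀⟩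
  set v := φ.symm ⟨w, hw.trans hm₀.2.1⟩
  have hφv : (φ v : L) = w := by simp [v]
  -- `φ u` bounds the whole set, so `u = ⊤`: `v` is full at `m`, whence `m₀ ≤ w`
  set u : (h : maxBelow G j) → Set.Iic (h : L) := Function.update ⊤ m (v m)
  have hvu : v ≤ u := by
    intro h
    by_cases hh : h = m
    · subst hh; simp [u]
    · simp [u, hh]
  have hφu : φ u = ⊤ := by
    refine top_unique (hlub.2 ?_)
    rintro x (rfl | ⟨hx, hxm⟩)
    · exact hφv ▸ φ.monotone hvu
    · have hδ : deltaTuple G j ⟨x, hx⟩ ≤ u := deltaTuple_le_iff.2 <| Function.update_of_ne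
        (show (⟨x, hx⟩ : maxBelow G j) ≠ m from fun h => hxm (congrArg Subtype.val h)) _ _
      simpa [hφ] using Subtype.coe_le_coe.2 (φ.monotone hδ)
  have hvm : v m = ⊤ := by
    simpa [u] using congrFun (φ.injective (hφu.trans φ.map_top.symm)) m
  have hm₀w := Subtype.coe_le_coe.2 (φ.monotone (deltaTuple_le_iff.2 hvm))
  rw [hφ, hφv] at hm₀w
  exact le_antisymm hw hm₀w

lemma IsNested.exists_isLUB (hN : IsNested G N) {T : Finset L} (hTN : ↑T ⊆ N) (hT : T.Nonempty)
    (hanti : IsAntichain (· ≤ ·) (T : Set L)) : ∃ j, IsLUB (T : Set L) j ∧ (j ∈ G → T = {j}) := by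
  rcases hT.exists_eq_singleton_or_nontrivial with ⟨t, rfl⟩ | hT
  · exact ⟨t, by simp, fun _ => rfl⟩
  · obtain ⟨j, hj, hjG⟩ :=
      hN.2 T hTN (Finset.one_lt_card_iff_nontrivial.2 hT) fun a ha b hb => hanti ha hb
    exact ⟨j, hj, fun h => absurd h hjG⟩

lemma IsNested.mem_of_mem_maxBelow [OrderBot L] [Finite L] (hG : IsBuilding G)
    (hN : IsNested G N) {T : Finset L} (hTN : ↑T ⊆ N) (hanti : IsAntichain (· ≤ ·) (T : Set L))
    {j : L} (hj : IsLUB (T : Set L) j) {m₀ : L} (hm₀ : m₀ ∈ maxBelow G j) : m₀ ∈ T := by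
  set T₀ := T.filter (· ≤ m₀)
  obtain ⟨w, hw, hwG⟩ : ∃ w, IsLUB (T₀ : Set L) w ∧ (w ∈ G → T₀ = {w}) := by
    rcases T₀.eq_empty_or_nonempty with h | h
    · exact ⟨⊥, by simp [h], fun h => absurd rfl (hG.1 ⊥ h)⟩
    · have hT₀T : (T₀ : Set L) ⊆ T := Finset.coe_subset.2 (Finset.filter_subset _ _)
      exact hN.exists_isLUB (hT₀T.trans hTN) h (hanti.subset hT₀T)
  have hwm₀ : w ≤ m₀ := hw.2 fun t ht => (Finset.mem_filter.1 ht).2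
  -- the elements of `T` not below `m₀` lie below the other maximal elements
  have hwj : IsLUB (insert w (maxBelow G j \ {m₀})) j := by
    refine ⟨?_, fun y hy => hj.2 fun t ht => ?_⟩
    · rintro x (rfl | ⟨hx, -⟩)
      exacts [hwm₀.trans hm₀.2.1, hx.2.1]
    by_cases htm₀ : t ≤ m₀
    · exact (hw.1 (Finset.mem_filter.2 ⟨ht, htm₀⟩)).trans (hy (Set.mem_insert w _))
    · obtain ⟨m, hm, htm⟩ := exists_mem_maxBelow (hN.1 (hTN ht)) (hj.1 ht)
      exact htm.trans (hy (Or.inr ⟨hm, fun h => htm₀ (htm.trans_eq h)⟩))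
  obtain rfl := hG.eq_of_isLUB hm₀ hwm₀ hwj
  exact Finset.mem_of_mem_filter w (hwG hm₀.1 ▸ Finset.mem_singleton_self w)

lemma IsNested.not_le_of_isLUB [OrderBot L] [Finite L] (hG : IsBuilding G) (hN : IsNested G N)
    {α : L} (hαG : α ∈ G) (hαmax : ∀ g ∈ G, α ≤ g → g = α) {T : Finset L} (hTN : ↑T ⊆ N)
    (hanti : IsAntichain (· ≤ ·) (T : Set L)) (hαT : α ∉ T) {j : L}
    (hj : IsLUB (T : Set L) j) : ¬ α ≤ j := fun hαj =>
  hαT (hN.mem_of_mem_maxBelow hG hTN hanti hj ⟨hαG, hαj, fun g hg _ hαg => hαmax g hg hαg⟩)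

lemma IsNested.bddAbove_pair_of_isLUB (hN : IsNested G N) {α : L} (hαN : α ∈ N) {T : Finset L}
    (hTN : ↑T ⊆ N) (hanti : IsAntichain (· ≤ ·) (T : Set L)) (hαT : ∀ t ∈ T, ¬ α ≤ t) {j : L}
    (hj : IsLUB (T : Set L) j) : BddAbove {α, j} := by
  -- the join of `α` with the elements of `T` not below `α` bounds both
  set T₁ := T.filter (¬ · ≤ α)
  have hT₁T : (T₁ : Set L) ⊆ T := Finset.coe_subset.2 (Finset.filter_subset _ _)
  have hanti₁ : IsAntichain (· ≤ ·) ((insert α T₁ : Finset L) : Set L) := by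
    rw [Finset.coe_insert]
    exact (hanti.subset hT₁T).insert (fun b hb _ => (Finset.mem_filter.1 hb).2)
      fun b hb _ => hαT b (Finset.mem_filter.1 hb).1
  have hsub : ((insert α T₁ : Finset L) : Set L) ⊆ N := by
    rw [Finset.coe_insert]
    exact Set.insert_subset hαN (hT₁T.trans hTN)
  obtain ⟨k, hk, -⟩ := hN.exists_isLUB hsub (Finset.insert_nonempty _ _) hanti₁
  have hαk : α ≤ k := hk.1 (Finset.mem_insert_self _ _)
  refine ⟨k, ?_⟩
  rintro x (rfl | rfl)
  · exact hαk
  · refine hj.2 fun t ht => ?_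
    by_cases htα : t ≤ α
    · exact htα.trans hαk
    · exact hk.1 (Finset.mem_insert_of_mem (Finset.mem_filter.2 ⟨ht, htα⟩))

end Building

namespace Blowup
variable {L : Type u} [PartialOrder L] {α : L}

lemma ext_iff {a b : Blowup L α} : a = b ↔ a.val = b.val := Subtype.ext_iff

lemma le_def {a b : Blowup L α} : a ≤ b ↔ a.val.1 ≤ b.val.1 ∧ a.val.2 ≤ b.val.2 := Iff.rfl

@[simp]
lemma val_mk1 {y : L} (hy : ¬ α ≤ y) : (mk1 y hy).val = (false, y) := rfl

@[simp]
lemma val_mk2 {y : L} (hy : ¬ α ≤ y) (hj : ∃ j, IsLUB {α, y} j) : (mk2 y hy hj).val = (true, y) :=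
  rfl

variable [OrderBot L] (hα : ¬ α ≤ ⊥)

/-- The element `[α, ⊥]`. -/
def exceptional : Blowup L α :=
  mk2 ⊥ hα ⟨α, ⟨by simp [upperBounds], fun _ h => h (Set.mem_insert α _)⟩⟩

/-- Restricted to `G`, this is the bijection `G → G̃`, `α ↦ [α, ⊥]`. -/
noncomputable def lift (y : L) : Blowup L α :=
  if h : α ≤ y then exceptional hα else mk1 y h

variable {hα} {y z : L}

@[simp]
lemma val_exceptional : (exceptional hα).val = (true, ⊥) := rfl

lemma val_lift_of_le (h : α ≤ y) : (lift hα y).val = (true, ⊥) := by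
  rw [lift, dif_pos h, val_exceptional]

lemma val_lift_of_not_le (h : ¬ α ≤ y) : (lift hα y).val = (false, y) := by
  rw [lift, dif_neg h, val_mk1]

lemma lift_injOn {s : Set L} (hs : ∀ g ∈ s, α ≤ g → g = α) : Set.InjOn (lift hα) s := by
  intro y hy z hz h
  rw [ext_iff] at h
  by_cases hαy : α ≤ y <;> by_cases hαz : α ≤ z
  · exact (hs y hy hαy).trans (hs z hz hαz).symm
  all_goals simp_all [val_lift_of_le, val_lift_of_not_le]

lemma le_of_lift_le_lift (hy : α ≤ y → y = α) (h : lift hα y ≤ lift hα z) : y ≤ z := by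
  rw [le_def] at h
  by_cases hαy : α ≤ y <;> by_cases hαz : α ≤ z
  · exact (hy hαy).trans_le hαz
  all_goals simp_all [val_lift_of_le, val_lift_of_not_le, Bool.le_iff_imp]

lemma lift_le_lift_iff (hy : ¬ α ≤ y) (hz : ¬ α ≤ z) : lift hα y ≤ lift hα z ↔ y ≤ z := by
  simp [le_def, val_lift_of_not_le hy, val_lift_of_not_le hz]

lemma isAntichain_image_lift {T : Set L} (hT : ∀ t ∈ T, α ≤ t → t = α)
    (h : IsAntichain (· ≤ ·) T) : IsAntichain (· ≤ ·) (lift hα '' T) := by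
  rintro _ ⟨y, hy, rfl⟩ _ ⟨z, hz, rfl⟩ hne hle
  exact h hy hz (fun h => hne (h ▸ rfl)) (le_of_lift_le_lift (hT y hy) hle)

lemma isAntichain_diff_of_image_lift {T : Set L} (hT : ∀ t ∈ T, α ≤ t → t = α)
    (h : IsAntichain (· ≤ ·) (lift hα '' T)) : IsAntichain (· ≤ ·) (T \ {α}) := by
  rintro y ⟨hy, hyα⟩ z ⟨hz, hzα⟩ hyz hle
  have hαy : ¬ α ≤ y := fun h => hyα (hT y hy h)
  have hαz : ¬ α ≤ z := fun h => hzα (hT z hz h)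
  exact h ⟨y, hy, rfl⟩ ⟨z, hz, rfl⟩ (fun h => hyz (lift_injOn hT hy hz h))
    ((lift_le_lift_iff hαy hαz).2 hle)

lemma eq_of_lift_eq_mk1 {hz : ¬ α ≤ z} (h : lift hα y = mk1 z hz) : y = z := by
  rw [ext_iff] at h
  by_cases hαy : α ≤ y <;> simp_all [val_lift_of_le, val_lift_of_not_le]

lemma eq_bot_of_lift_eq_mk2 {hz : ¬ α ≤ z} {hj} (h : lift hα y = mk2 z hz hj) : z = ⊥ := by
  rw [ext_iff] at h
  by_cases hαy : α ≤ y <;> simp_all [val_lift_of_le, val_lift_of_not_le]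

lemma isLUB_image_lift {T : Set L} (hT : ∀ t ∈ T, α ≤ t → t = α) {v : L}
    (hv : IsLUB (T \ {α}) v) {w : Blowup L α} (hw₁ : w.val.1 = true ↔ α ∈ T) (hw₂ : w.val.2 = v) :
    IsLUB (lift hα '' T) w := by
  have hαt : ∀ t ∈ T, t ≠ α → ¬ α ≤ t := fun t ht hne hαt => hne (hT t ht hαt)
  refine ⟨?_, fun z hz => le_def.2 ⟨?_, ?_⟩⟩
  · rintro _ ⟨t, ht, rfl⟩
    rw [le_def]
    by_cases htα : t = α
    · subst htα
      simp [val_lift_of_le le_rfl, hw₁.2 ht]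
    · simpa [val_lift_of_not_le (hαt t ht htα), hw₂] using hv.1 ⟨ht, htα⟩
  · cases hw : w.val.1
    · exact Bool.false_le _
    · have := le_def.1 (hz ⟨α, hw₁.1 hw, rfl⟩)
      simpa [val_lift_of_le le_rfl] using this.1
  · refine hw₂ ▸ hv.2 fun t ⟨ht, htα⟩ => ?_
    have := le_def.1 (hz ⟨t, ht, rfl⟩)
    simpa [val_lift_of_not_le (hαt t ht htα)] using this.2

end Blowup

lemma liftSet_eq_image_lift {L : Type u} [PartialOrder L] [OrderBot L] {α : L} (hα : ¬ α ≤ ⊥)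
    {N : Set L} (hN : ∀ g ∈ N, α ≤ g → g = α) : liftSet α N = Blowup.lift hα '' N := by
  ext w
  constructor
  · rintro (⟨h₁, h₂, -⟩ | ⟨h₁, h₂⟩)
    · refine ⟨w.val.2, h₂, Subtype.ext ?_⟩
      rw [Blowup.val_lift_of_not_le w.2.1, ← h₁]
    · exact ⟨α, h₂, Subtype.ext ((Blowup.val_lift_of_le le_rfl).trans h₁.symm)⟩
  · rintro ⟨y, hy, rfl⟩
    by_cases hαy : α ≤ y
    · obtain rfl := hN y hy hαy
      exact Or.inr ⟨Blowup.val_lift_of_le le_rfl, hy⟩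
    · have hval := Blowup.val_lift_of_not_le (hα := hα) hαy
      exact Or.inl ⟨by rw [hval], by rw [hval]; exact hy, by rw [hval]; exact fun h => hαy h.ge⟩

section Nested
variable {L : Type u} [SemilatticeInf L] [Finite L] [OrderBot L] {G N : Set L} {α : L}
  {hα : ¬ α ≤ ⊥}

open Blowup in
theorem IsNested.image_lift (hG : IsBuilding G) (hαG : α ∈ G)
    (hαmax : ∀ g ∈ G, α ≤ g → g = α) (hN : IsNested G N) :
    IsNested (lift hα '' G) (lift hα '' N) := by
  refine ⟨Set.image_mono hN.1, fun S hSN hS hSanti => ?_⟩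
  obtain ⟨T, hTN, rfl⟩ := Finset.subset_set_image_iff.1 hSN
  have hTG : ∀ t ∈ (T : Set L), α ≤ t → t = α := fun t ht => hαmax t (hN.1 (hTN ht))
  set T' := T.erase α
  have hT'N : (T' : Set L) ⊆ N := (Finset.coe_subset.2 (T.erase_subset α)).trans hTN
  have hT'α : ∀ t ∈ T', ¬ α ≤ t := fun t ht hαt =>
    T.ne_of_mem_erase ht (hTG t (T.mem_of_mem_erase ht) hαt)
  have hanti : IsAntichain (· ≤ ·) (T' : Set L) := by
    rw [Finset.coe_erase]
    refine isAntichain_diff_of_image_lift (hα := hα) hTG ?_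
    rw [← Finset.coe_image]
    exact fun a ha b hb => hSanti a ha b hb
  have hlub {j : L} (hj : IsLUB (T' : Set L) j) {w : Blowup L α} (hw₁ : w.val.1 = true ↔ α ∈ T)
      (hw₂ : w.val.2 = j) : IsLUB (T.image (lift hα) : Set (Blowup L α)) w := by
    rw [Finset.coe_image]
    exact isLUB_image_lift hTG (by rwa [← Finset.coe_erase]) (by simpa using hw₁) hw₂
  have hcard : 2 ≤ T.card := hS.trans Finset.card_image_le
  by_cases hαT : α ∈ T
  · have hT' : T'.Nonempty := by
      rw [← Finset.card_pos, Finset.card_erase_of_mem hαT]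
      omega
    obtain ⟨j, hj, -⟩ := hN.exists_isLUB hT'N hT' hanti
    have hαj := hN.not_le_of_isLUB hG hαG hαmax hT'N hanti (T.notMem_erase α) hj
    obtain ⟨k, hk⟩ := exists_isLUB_of_bddAbove
      (hN.bddAbove_pair_of_isLUB (hTN hαT) hT'N hanti hT'α hj)
    refine ⟨mk2 j hαj ⟨k, hk⟩, hlub hj (by simp [hαT]) rfl, ?_⟩
    rintro ⟨g, -, hg⟩
    obtain ⟨t, ht⟩ := hT'
    exact hG.1 t (hN.1 (hT'N ht)) (le_bot_iff.1 (eq_bot_of_lift_eq_mk2 hg ▸ hj.1 ht))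
  · have hT'T : T' = T := Finset.erase_eq_of_notMem hαT
    obtain ⟨j, hj, hjG⟩ :=
      hN.exists_isLUB hT'N (Finset.card_pos.1 (by rw [hT'T]; omega)) hanti
    have hαj := hN.not_le_of_isLUB hG hαG hαmax hT'N hanti (T.notMem_erase α) hj
    refine ⟨mk1 j hαj, hlub hj (by simp [hαT]) rfl, ?_⟩
    rintro ⟨g, hg, hgj⟩
    obtain rfl := eq_of_lift_eq_mk1 hgj
    have := congrArg Finset.card (hT'T.symm.trans (hjG hg))
    rw [Finset.card_singleton] at this
    omega

open Blowup in
theorem IsNested.of_image_lift (hαmax : ∀ g ∈ G, α ≤ g → g = α) (hNG : N ⊆ G)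
    (hN : IsNested (lift hα '' G) (lift hα '' N)) : IsNested G N := by
  refine ⟨hNG, fun T hTN hT hTanti => ?_⟩
  have hTG : ∀ t ∈ (T : Set L), α ≤ t → t = α := fun t ht => hαmax t (hNG (hTN ht))
  have hSanti := isAntichain_image_lift (hα := hα) hTG fun a ha b hb => hTanti a ha b hb
  obtain ⟨w, hw, hwG⟩ := hN.2 (T.image (lift hα))
    (by rw [Finset.coe_image]; exact Set.image_mono hTN)
    (by rwa [Finset.card_image_of_injOn (lift_injOn hTG)])
    (by
      rw [← Finset.coe_image] at hSanti
      exact fun a ha b hb => hSanti ha hb)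
  rw [Finset.coe_image] at hw
  have hle : ∀ t ∈ T, ¬ α ≤ t → t ≤ w.val.2 := fun t ht hαt => by
    simpa [val_lift_of_not_le hαt] using (le_def.1 (hw.1 ⟨t, ht, rfl⟩)).2
  by_cases hαT : α ∈ T
  · -- `w = [α, y]`, so `α ∨ y` bounds `T`; a join of `T` in `G` would be `α`, above all of `T`
    have hw₁ : w.val.1 = true := by
      simpa [val_lift_of_le le_rfl, Bool.le_iff_imp] using (le_def.1 (hw.1 ⟨α, hαT, rfl⟩)).1
    obtain ⟨k, hk⟩ := w.2.2 hw₁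
    have hkT : k ∈ upperBounds (T : Set L) := fun t ht => by
      by_cases hαt : α ≤ t
      · exact hTG t ht hαt ▸ hk.1 (Set.mem_insert α _)
      · exact (hle t ht hαt).trans (hk.1 (Set.mem_insert_of_mem α rfl))
    obtain ⟨j, hj⟩ := exists_isLUB_of_bddAbove ⟨k, hkT⟩
    refine ⟨j, hj, fun hjG => ?_⟩
    obtain rfl := hαmax j hjG (hj.1 hαT)
    obtain ⟨t, ht, htα⟩ := T.exists_mem_ne hT j
    exact hTanti t ht j hαT htα (hj.1 ht)
  · -- `w.2` bounds `T`, so `α ≰ ⋁ T` and `w` is the image of `⋁ T`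
    have hTα : ∀ t ∈ T, ¬ α ≤ t := fun t ht hαt => hαT (hTG t ht hαt ▸ ht)
    obtain ⟨j, hj⟩ := exists_isLUB_of_bddAbove ⟨_, fun t ht => hle t ht (hTα t ht)⟩
    have hαj : ¬ α ≤ j := fun h => w.2.1 (h.trans (hj.2 fun t ht => hle t ht (hTα t ht)))
    refine ⟨j, hj, fun hjG => hwG ⟨j, hjG, ?_⟩⟩
    refine (isLUB_image_lift hTG ?_ ?_ (by rw [val_lift_of_not_le hαj])).unique hw
    · rwa [Set.sdiff_singleton_eq_self (Finset.mem_coe.not.2 hαT)]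
    · simp [val_lift_of_not_le hαj, hαT]

end Nested

/-- for `α` maximal in a building set `G`, replacing `α` by `[α, ⊥]` is a
bijection between the nested subsets of `G` and the nested subsets of the building set
`G̃ = (G \ {α}) ∪ {[α, ⊥]}` of the blowup. -/
theorem nested_sets_biject_under_blowup {L : Type u} [SemilatticeInf L] [Fintype L]
    [OrderBot L] (G : Set L) (hG : IsBuilding G) (α : L) (hαG : α ∈ G)
    (hαmax : ∀ g ∈ G, α ≤ g → g = α) :
    Set.BijOn (liftSet α) {N : Set L | IsNested G N}
      {M : Set (Blowup L α) | IsNested (liftSet α G) M} := by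
  have hα : ¬ α ≤ ⊥ := fun h => hG.1 α hαG (le_bot_iff.1 h)
  have hlift {N : Set L} (hN : N ⊆ G) : liftSet α N = Blowup.lift hα '' N :=
    liftSet_eq_image_lift hα fun g hg => hαmax g (hN hg)
  refine ⟨fun N hN => ?_, fun N₁ hN₁ N₂ hN₂ h => ?_, fun M hM => ?_⟩
  · rw [Set.mem_ofPred_eq, hlift hN.1, hlift subset_rfl]
    exact hN.image_lift hG hαG hαmax
  · rw [hlift hN₁.1, hlift hN₂.1] at h
    exact ((Blowup.lift_injOn hαmax).image_eq_image_iff hN₁.1 hN₂.1).1 h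
  · rw [Set.mem_ofPred_eq, hlift subset_rfl] at hM
    obtain ⟨N, hNG, rfl⟩ := Set.subset_image_iff.1 hM.1
    exact ⟨N, hM.of_image_lift hαmax hNG, hlift hNG⟩
end
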